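/- Let u : ℝ² → ℝ be a C² function solving L_u(L_u u) = 0 on ℝ², and let A(c) := (L_u u)(c,0) and B(c) := u(c,0) (which are differentiable since u is C²). Then for every c ∈ ℝ, either (A'(c) = 0 and B'(c) = 0) or B'(c)² < 2·A'(c). -/

import Mathlib

/-!
Write `w = L_u u`. Since `L_u w = 0`, along the characteristic `x' = u` through `(c, 0)` the
value of `w` stays `A(c)` and `u` grows with slope `A(c)`; so this characteristic is the parabola
`x = c + B(c) t + A(c) t²/2` and `u(c + B(c) t + A(c) t²/2, t) = B(c) + A(c) t` for all `t`
(uniqueness by Grönwall). Differentiating in `c` gives `∂ₓu · p = p'` along the parabola, where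
`p(t) = 1 + B'(c) t + A'(c) t²/2`. Since `∂ₓu` is continuous, `p` has no real zero, which is
exactly the dichotomy `A'(c) = B'(c) = 0` or `B'(c)² < 2 A'(c)`.
-/

/-- The operator `L_u` acting on `v`:  `(L_u v)(x,t) = ∂v/∂t + u·∂v/∂x`,
with coordinates `(x,t)` on `ℝ × ℝ`. -/
noncomputable def Lop (u v : ℝ × ℝ → ℝ) : ℝ × ℝ → ℝ :=
  fun p => fderiv ℝ v p (0, 1) + u p * fderiv ℝ v p (1, 0)

open Set Filter Topology

theorem ContinuousLinearMap.apply_pair (L : ℝ × ℝ →L[ℝ] ℝ) (x y : ℝ) :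
    L (x, y) = x * L (1, 0) + y * L (0, 1) := by
  rw [← smul_eq_mul x, ← smul_eq_mul y, ← map_smul, ← map_smul, ← map_add]
  simp

theorem fderiv_apply_eq_Lop_add (u v : ℝ × ℝ → ℝ) (p : ℝ × ℝ) (ξ : ℝ) :
    fderiv ℝ v p (ξ, 1) = Lop u v p + (ξ - u p) * fderiv ℝ v p (1, 0) := by
  rw [Lop, ContinuousLinearMap.apply_pair]
  ring

theorem contDiff_Lop {n : WithTop ℕ∞} {u v : ℝ × ℝ → ℝ} (hu : ContDiff ℝ n u)
    (hv : ContDiff ℝ (n + 1) v) : ContDiff ℝ n (Lop u v) := by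
  have hD : ContDiff ℝ n (fderiv ℝ v) := hv.fderiv_right le_rfl
  exact (hD.clm_apply contDiff_const).add (hu.mul (hD.clm_apply contDiff_const))

theorem continuous_fderiv_apply_one_zero {u : ℝ × ℝ → ℝ} (hu : ContDiff ℝ 1 u) {γ : ℝ → ℝ × ℝ}
    (hγ : Continuous γ) : Continuous fun s => fderiv ℝ u (γ s) (1, 0) :=
  ((hu.continuous_fderiv one_ne_zero).comp hγ).clm_apply continuous_const

theorem eq_zero_of_norm_deriv_le_mul_norm {E : Type*} [NormedAddCommGroup E] [NormedSpace ℝ E]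
    {F F' : ℝ → E} {K t : ℝ} (hF : ∀ s, HasDerivAt F (F' s) s) (h0 : F 0 = 0)
    (hbound : ∀ s ∈ uIcc 0 t, ‖F' s‖ ≤ K * ‖F s‖) : F t = 0 := by
  rcases le_total 0 t with ht | ht
  · rw [uIcc_of_le ht] at hbound
    exact eq_zero_of_abs_deriv_le_mul_abs_self_of_eq_zero_right
      (fun s _ => (hF s).continuousAt.continuousWithinAt) (fun s _ => (hF s).hasDerivWithinAt)
      h0 (fun s hs => hbound s (Ico_subset_Icc_self hs)) t ⟨ht, le_rfl⟩
  · rw [uIcc_of_ge ht] at hbound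
    have hG : ∀ s, HasDerivAt (fun s => F (-s)) (-F' (-s)) s := fun s => by
      simpa [Function.comp_def] using (hF (-s)).scomp s (hasDerivAt_neg s)
    have := eq_zero_of_abs_deriv_le_mul_abs_self_of_eq_zero_right
      (fun s _ => (hG s).continuousAt.continuousWithinAt) (fun s _ => (hG s).hasDerivWithinAt)
      (a := 0) (b := -t) (by simpa using h0) (K := K)
      (fun s hs => by simpa using hbound (-s) ⟨by linarith [hs.2], by linarith [hs.1]⟩)
      (-t) ⟨by linarith, le_rfl⟩
    simpa using this

theorem norm_linear_system_le {α β M : ℝ} (hα : |α| ≤ M) (hβ : |β| ≤ M) (y : ℝ × ℝ) :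
    ‖(y.2 - y.1 * α, -(y.1 * β))‖ ≤ (1 + M) * ‖y‖ := by
  have h1 : |y.1| ≤ ‖y‖ := norm_fst_le y
  have h2 : |y.2| ≤ ‖y‖ := norm_snd_le y
  have hM : 0 ≤ M := (abs_nonneg α).trans hα
  rw [Prod.norm_def, Real.norm_eq_abs, Real.norm_eq_abs, abs_neg, abs_mul]
  refine max_le ?_ ?_
  · calc |y.2 - y.1 * α| ≤ |y.2| + |y.1| * |α| := by rw [← abs_mul]; exact abs_sub _ _
      _ ≤ (1 + M) * ‖y‖ := by nlinarith [abs_nonneg y.1, abs_nonneg α]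
  · nlinarith [abs_nonneg y.1, abs_nonneg β]

theorem eq_along_characteristic_of_Lop_Lop_eq_zero {u : ℝ × ℝ → ℝ} (hu : ContDiff ℝ 1 u)
    (hw : ContDiff ℝ 1 (Lop u u)) (hpde : ∀ p, Lop u (Lop u u) p = 0) (c t : ℝ) :
    u (c + u (c, 0) * t + Lop u u (c, 0) * t ^ 2 / 2, t) = u (c, 0) + Lop u u (c, 0) * t := by
  set w := Lop u u
  set b := u (c, 0)
  set a := w (c, 0)
  set γ : ℝ → ℝ × ℝ := fun s => (c + b * s + a * s ^ 2 / 2, s)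
  set F : ℝ → ℝ × ℝ := fun s => (u (γ s) - b - a * s, w (γ s) - a)
  have hγ : ∀ s, HasDerivAt γ (b + a * s, 1) s := fun s => by
    refine HasDerivAt.prodMk ?_ (hasDerivAt_id s)
    refine ((((hasDerivAt_id' s).const_mul b).const_add c).add
      (((hasDerivAt_pow 2 s).const_mul a).div_const 2)).congr_deriv ?_
    ring
  -- `F` vanishes at `0` and solves a linear system with coefficients `∂ₓu`, `∂ₓw` along `γ`.
  have hF : ∀ s, HasDerivAt F
      ((F s).2 - (F s).1 * fderiv ℝ u (γ s) (1, 0), -((F s).1 * fderiv ℝ w (γ s) (1, 0))) s := by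
    intro s
    have hu' := ((hu.differentiable one_ne_zero _).hasFDerivAt.comp_hasDerivAt s (hγ s))
    have hw' := ((hw.differentiable one_ne_zero _).hasFDerivAt.comp_hasDerivAt s (hγ s))
    rw [fderiv_apply_eq_Lop_add u] at hu'
    rw [fderiv_apply_eq_Lop_add u, hpde] at hw'
    refine (((hu'.sub_const b).sub ((hasDerivAt_id' s).const_mul a)).prodMk
      (hw'.sub_const a)).congr_deriv ?_
    simp only [F, w, Prod.mk.injEq]
    constructor <;> ring
  have hcont : Continuous γ := by fun_prop
  obtain ⟨M₁, hM₁⟩ := (isCompact_uIcc (a := 0) (b := t)).exists_bound_of_continuousOn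
    (continuous_fderiv_apply_one_zero hu hcont).continuousOn
  obtain ⟨M₂, hM₂⟩ := (isCompact_uIcc (a := 0) (b := t)).exists_bound_of_continuousOn
    (continuous_fderiv_apply_one_zero hw hcont).continuousOn
  have hFt : F t = 0 := eq_zero_of_norm_deriv_le_mul_norm hF
    (by simp [F, γ, b, a]) fun s hs =>
      norm_linear_system_le ((hM₁ s hs).trans (le_max_left M₁ M₂))
        ((hM₂ s hs).trans (le_max_right M₁ M₂)) (F s)
  have hFt₁ := congrArg Prod.fst hFt
  dsimp only [F, γ, Prod.fst_zero] at hFt₁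
  linarith

theorem fderiv_apply_mul_eq_of_forall_eq {u : ℝ × ℝ → ℝ} {A B : ℝ → ℝ} {a b c : ℝ}
    (hu : Differentiable ℝ u) (hA : HasDerivAt A a c) (hB : HasDerivAt B b c)
    (h : ∀ x t, u (x + B x * t + A x * t ^ 2 / 2, t) = B x + A x * t) (t : ℝ) :
    fderiv ℝ u (c + B c * t + A c * t ^ 2 / 2, t) (1, 0) * (1 + b * t + a * t ^ 2 / 2)
      = b + a * t := by
  have hX : HasDerivAt (fun x => (x + B x * t + A x * t ^ 2 / 2, t))
      (1 + b * t + a * t ^ 2 / 2, 0) c :=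
    (((hasDerivAt_id' c).add (hB.mul_const t)).add ((hA.mul_const _).div_const 2)).prodMk
      (hasDerivAt_const c t)
  have hcomp := (hu _).hasFDerivAt.comp_hasDerivAt c hX
  simp only [Function.comp_def, h] at hcomp
  rw [← hcomp.unique (hB.add (hA.mul_const t)), ContinuousLinearMap.apply_pair _ (1 + b * t + _) 0]
  ring

/-- An identity `q * p = p'` with `q` continuous forces the quadratic `p` to have no real zero:
a zero would be a double one, and then `q` would blow up like `2 / (t - t₀)` near it. -/
theorem quadratic_ne_zero_of_continuous_mul_eq {a b : ℝ} {q : ℝ → ℝ} (hq : Continuous q)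
    (h : ∀ t, q t * (1 + b * t + a * t ^ 2 / 2) = b + a * t) (t₀ : ℝ) :
    1 + b * t₀ + a * t₀ ^ 2 / 2 ≠ 0 := by
  intro hroot
  have hderiv : b + a * t₀ = 0 := by rw [← h t₀, hroot, mul_zero]
  have hsq : ∀ t, 1 + b * t + a * t ^ 2 / 2 = a / 2 * (t - t₀) ^ 2 := fun t => by
    linear_combination hroot + (t - t₀) * hderiv
  have ha : a ≠ 0 := by
    rintro rfl
    simpa using hsq 0
  have hlim : Tendsto (fun ε => q (t₀ + ε) * ε) (𝓝[≠] 0) (𝓝 (q (t₀ + 0) * 0)) :=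
    ((hq.comp (continuous_const_add t₀)).mul continuous_id).continuousAt.mono_left
      nhdsWithin_le_nhds
  have heq : ∀ ε ≠ 0, q (t₀ + ε) * ε = 2 := fun ε hε => by
    have := h (t₀ + ε)
    rw [hsq, add_sub_cancel_left] at this
    apply mul_right_cancel₀ (mul_ne_zero ha hε)
    linear_combination 2 * this + 2 * hderiv
  have h2 : Tendsto (fun ε => q (t₀ + ε) * ε) (𝓝[≠] 0) (𝓝 2) :=
    tendsto_const_nhds.congr' (eventually_nhdsWithin_of_forall fun ε hε => (heq ε hε).symm)
  simpa using tendsto_nhds_unique hlim h2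

theorem eq_zero_and_eq_zero_or_sq_lt_of_forall_ne_zero {a b : ℝ}
    (h : ∀ t, 1 + b * t + a * t ^ 2 / 2 ≠ 0) : (a = 0 ∧ b = 0) ∨ b ^ 2 < 2 * a := by
  by_contra! ⟨hab, hdisc⟩
  rcases eq_or_ne a 0 with rfl | ha
  · have hb := hab rfl
    exact h (-1 / b) (by field_simp; ring)
  · obtain ⟨t, ht⟩ := exists_quadratic_eq_zero (a := a / 2) (b := b) (c := 1)
      (div_ne_zero ha two_ne_zero)
      ⟨√(b ^ 2 - 2 * a), by rw [← sq, Real.sq_sqrt (by linarith), discrim]; ring⟩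
    exact h t (by linear_combination ht)

theorem stmt3 (u : ℝ × ℝ → ℝ) (hu : ContDiff ℝ 2 u)
    (hpde : ∀ p : ℝ × ℝ, Lop u (Lop u u) p = 0)
    (A B : ℝ → ℝ) (hA : ∀ c, A c = Lop u u (c, 0)) (hB : ∀ c, B c = u (c, 0)) :
    ∀ c : ℝ, (deriv A c = 0 ∧ deriv B c = 0) ∨ (deriv B c) ^ 2 < 2 * deriv A c := by
  intro c
  have hu₁ : ContDiff ℝ 1 u := hu.of_le one_le_two
  have hw : ContDiff ℝ 1 (Lop u u) := contDiff_Lop hu₁ hu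
  have hud : Differentiable ℝ u := hu₁.differentiable one_ne_zero
  have hwd : Differentiable ℝ (Lop u u) := hw.differentiable one_ne_zero
  have hA' : DifferentiableAt ℝ A c := by
    rw [funext hA]; fun_prop
  have hB' : DifferentiableAt ℝ B c := by
    rw [funext hB]; fun_prop
  have hchar : ∀ x t, u (x + B x * t + A x * t ^ 2 / 2, t) = B x + A x * t := fun x t => by
    rw [hA, hB]
    exact eq_along_characteristic_of_Lop_Lop_eq_zero hu₁ hw hpde x t
  have hq : Continuous fun t => fderiv ℝ u (c + B c * t + A c * t ^ 2 / 2, t) (1, 0) :=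
    continuous_fderiv_apply_one_zero hu₁ (by fun_prop)
  exact eq_zero_and_eq_zero_or_sq_lt_of_forall_ne_zero
    (quadratic_ne_zero_of_continuous_mul_eq hq
      (fderiv_apply_mul_eq_of_forall_eq hud hA'.hasDerivAt hB'.hasDerivAt hchar))
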